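/- For x ∈ (0,1] define, on the support [(1−x)/(1+x), (1+x)/(1−x)], the densities f_x(ℓ|0) = 2/(x(1+ℓ)³), f_x(ℓ|1) = 2ℓ/(x(1+ℓ)³), and the CDFs F_x(ℓ|0) = (1+x)Y_x(ℓ) − xY_x(ℓ)², F_x(ℓ|1) = (1−x)Y_x(ℓ) + xY_x(ℓ)², where Y_x(ℓ) = ((1+x)ℓ − (1−x))/(2x(1+ℓ)). Then for all 0 < x_l < x_h ≤ 1, each state s ∈ {0,1}, and each ℓ ∈ ((1−x_l)/(1+x_l), (1+x_l)/(1−x_l)): f_{x_l}(ℓ|s)/F_{x_l}(ℓ|s) > f_{x_h}(ℓ|s)/F_{x_h}(ℓ|s) and f_{x_l}(ℓ|s)/(1−F_{x_l}(ℓ|s)) > f_{x_h}(ℓ|s)/(1−F_{x_h}(ℓ|s)). -/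

import Mathlib

/-- Inverse of the multiplicative linear likelihood ratio. -/
noncomputable def YML (x ℓ : ℝ) : ℝ := ((1 + x)*ℓ - (1 - x)) / (2*x*(1 + ℓ))

/-- State-`s` density of the multiplicative linear experiment of weight `x`, with
signals labeled as likelihood ratios. -/
noncomputable def fML (x : ℝ) (s : Fin 2) (ℓ : ℝ) : ℝ :=
  if s = 0 then 2 / (x * (1 + ℓ)^3) else 2*ℓ / (x * (1 + ℓ)^3)

/-- State-`s` CDF of the multiplicative linear experiment of weight `x` (closed form). -/
noncomputable def FML (x : ℝ) (s : Fin 2) (ℓ : ℝ) : ℝ :=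
  if s = 0 then (1 + x) * YML x ℓ - x * (YML x ℓ)^2
  else (1 - x) * YML x ℓ + x * (YML x ℓ)^2

/-!
Put `t = (ℓ - 1) / (ℓ + 1)`; the interior of the support of the weight-`x` experiment is
`|t| < x`. The density is `fML 1 s ℓ / x`, so each (reverse) hazard rate is a positive constant,
independent of `x`, divided by `x * F_x` or `x * (1 - F_x)`. These are explicit quadratics in `x`,
e.g. `4 x F_x(ℓ|0) = (x + t) (2 + x - t) = x (2 + x) + t (2 - t)`, each strictly increasing in
`x ∈ (0, 1]`, which gives all four inequalities at once.
-/

open Set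

/-- The posterior `ℓ / (1 + ℓ)` of state `1` under a uniform prior, rescaled from `[0, 1]` to
`[-1, 1]`. -/
noncomputable def centeredPosterior (ℓ : ℝ) : ℝ := (ℓ - 1) / (ℓ + 1)

lemma pos_and_abs_centeredPosterior_lt_of_mem_Ioo {x ℓ : ℝ} (hx0 : 0 < x) (hx1 : x < 1)
    (hℓ : ℓ ∈ Ioo ((1 - x) / (1 + x)) ((1 + x) / (1 - x))) :
    0 < ℓ ∧ |centeredPosterior ℓ| < x := by
  have hlo : 1 - x < ℓ * (1 + x) := (div_lt_iff₀ (by linarith)).1 hℓ.1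
  have hhi : ℓ * (1 - x) < 1 + x := (lt_div_iff₀ (by linarith)).1 hℓ.2
  have hℓ0 : 0 < ℓ := pos_of_mul_pos_left (by linarith : 0 < ℓ * (1 + x)) (by linarith)
  refine ⟨hℓ0, abs_lt.2 ⟨?_, ?_⟩⟩
  · rw [centeredPosterior, lt_div_iff₀ (by linarith)]; linarith
  · rw [centeredPosterior, div_lt_iff₀ (by linarith)]; linarith

lemma fML_eq_div (x : ℝ) (s : Fin 2) (ℓ : ℝ) : fML x s ℓ = fML 1 s ℓ / x := by
  unfold fML; split_ifs <;> rw [one_mul, div_div, mul_comm x]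

section Identities

variable {x ℓ : ℝ}

lemma fML_pos (s : Fin 2) (hx : 0 < x) (hℓ : 0 < ℓ) : 0 < fML x s ℓ := by
  unfold fML; split_ifs <;> positivity

lemma two_mul_mul_YML (hx : x ≠ 0) (hℓ : 1 + ℓ ≠ 0) :
    2 * x * YML x ℓ = x + centeredPosterior ℓ := by
  rw [YML, centeredPosterior, add_comm ℓ 1]
  field_simp
  ring

lemma four_mul_mul_FML_zero (hx : x ≠ 0) (hℓ : 1 + ℓ ≠ 0) :
    4 * x * FML x 0 ℓ = (x + centeredPosterior ℓ) * (2 + x - centeredPosterior ℓ) := by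
  have h := two_mul_mul_YML hx hℓ
  simp only [FML, ↓reduceIte]
  linear_combination (2 + 2 * x - 2 * x * YML x ℓ - (x + centeredPosterior ℓ)) * h

lemma four_mul_mul_one_sub_FML_zero (hx : x ≠ 0) (hℓ : 1 + ℓ ≠ 0) :
    4 * x * (1 - FML x 0 ℓ) = (x - centeredPosterior ℓ) * (2 - x - centeredPosterior ℓ) := by
  linear_combination -four_mul_mul_FML_zero hx hℓ

lemma four_mul_mul_FML_one (hx : x ≠ 0) (hℓ : 1 + ℓ ≠ 0) :
    4 * x * FML x 1 ℓ = (x + centeredPosterior ℓ) * (2 - x + centeredPosterior ℓ) := by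
  have h := two_mul_mul_YML hx hℓ
  simp only [FML, one_ne_zero, ↓reduceIte]
  linear_combination (2 - 2 * x + 2 * x * YML x ℓ + (x + centeredPosterior ℓ)) * h

lemma four_mul_mul_one_sub_FML_one (hx : x ≠ 0) (hℓ : 1 + ℓ ≠ 0) :
    4 * x * (1 - FML x 1 ℓ) = (x - centeredPosterior ℓ) * (2 + x + centeredPosterior ℓ) := by
  linear_combination -four_mul_mul_FML_one hx hℓ

end Identities

lemma FML_mem_Ioo (s : Fin 2) {x ℓ : ℝ} (hx : x ≤ 1) (ht : |centeredPosterior ℓ| < x)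
    (hℓ : 1 + ℓ ≠ 0) : FML x s ℓ ∈ Ioo 0 1 := by
  obtain ⟨htl, htr⟩ := abs_lt.1 ht
  have hx0 : 0 < x := by linarith
  have hF : 0 < 4 * x * FML x s ℓ ∧ 0 < 4 * x * (1 - FML x s ℓ) := by
    match s with
    | 0 =>
      rw [four_mul_mul_FML_zero hx0.ne' hℓ, four_mul_mul_one_sub_FML_zero hx0.ne' hℓ]
      constructor <;> apply mul_pos <;> linarith
    | 1 =>
      rw [four_mul_mul_FML_one hx0.ne' hℓ, four_mul_mul_one_sub_FML_one hx0.ne' hℓ]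
      constructor <;> apply mul_pos <;> linarith
  constructor
  · exact pos_of_mul_pos_right hF.1 (by positivity)
  · exact sub_pos.1 (pos_of_mul_pos_right hF.2 (by positivity))

section Monotone

variable {xl xh ℓ : ℝ} (s : Fin 2) (hxl : 0 < xl) (hlh : xl < xh) (hxh : xh ≤ 1)
  (hℓ : 1 + ℓ ≠ 0)
include hxl hlh hxh hℓ

lemma mul_FML_lt_mul_FML : xl * FML xl s ℓ < xh * FML xh s ℓ := by
  suffices 4 * xl * FML xl s ℓ < 4 * xh * FML xh s ℓ by linarith
  have hxh0 : xh ≠ 0 := (hxl.trans hlh).ne'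
  match s with
  | 0 =>
    rw [four_mul_mul_FML_zero hxl.ne' hℓ, four_mul_mul_FML_zero hxh0 hℓ]
    nlinarith [mul_pos (sub_pos.2 hlh) (by linarith : 0 < 2 + xh + xl)]
  | 1 =>
    rw [four_mul_mul_FML_one hxl.ne' hℓ, four_mul_mul_FML_one hxh0 hℓ]
    nlinarith [mul_pos (sub_pos.2 hlh) (by linarith : 0 < 2 - xh - xl)]

lemma mul_one_sub_FML_lt_mul_one_sub_FML :
    xl * (1 - FML xl s ℓ) < xh * (1 - FML xh s ℓ) := by
  suffices 4 * xl * (1 - FML xl s ℓ) < 4 * xh * (1 - FML xh s ℓ) by linarith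
  have hxh0 : xh ≠ 0 := (hxl.trans hlh).ne'
  match s with
  | 0 =>
    rw [four_mul_mul_one_sub_FML_zero hxl.ne' hℓ, four_mul_mul_one_sub_FML_zero hxh0 hℓ]
    nlinarith [mul_pos (sub_pos.2 hlh) (by linarith : 0 < 2 - xh - xl)]
  | 1 =>
    rw [four_mul_mul_one_sub_FML_one hxl.ne' hℓ, four_mul_mul_one_sub_FML_one hxh0 hℓ]
    nlinarith [mul_pos (sub_pos.2 hlh) (by linarith : 0 < 2 + xh + xl)]

end Monotone

/-- Multiplicative linear experiments with `x_l < x_h` satisfy the noisier-low-type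
assumption: in each state, both the reverse hazard rate and the hazard rate of the
weight-`x_l` experiment strictly exceed those of the weight-`x_h` experiment on the
interior of the smaller support. -/
theorem stmt_15 (xl xh : ℝ) (hxl : 0 < xl) (hlh : xl < xh) (hxh : xh ≤ 1) :
    ∀ s : Fin 2, ∀ ℓ ∈ Set.Ioo ((1 - xl) / (1 + xl)) ((1 + xl) / (1 - xl)),
      fML xl s ℓ / FML xl s ℓ > fML xh s ℓ / FML xh s ℓ ∧
      fML xl s ℓ / (1 - FML xl s ℓ) > fML xh s ℓ / (1 - FML xh s ℓ) := by
  intro s ℓ hℓ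
  have hxl1 : xl < 1 := hlh.trans_le hxh
  obtain ⟨hℓ0, ht⟩ := pos_and_abs_centeredPosterior_lt_of_mem_Ioo hxl hxl1 hℓ
  have hℓ1 : 1 + ℓ ≠ 0 := by positivity
  obtain ⟨hF0, hF1⟩ := FML_mem_Ioo s hxl1.le ht hℓ1
  have hf : 0 < fML 1 s ℓ := fML_pos s one_pos hℓ0
  rw [fML_eq_div xl, fML_eq_div xh, div_div, div_div, div_div, div_div]
  exact ⟨div_lt_div_of_pos_left hf (mul_pos hxl hF0) (mul_FML_lt_mul_FML s hxl hlh hxh hℓ1),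
    div_lt_div_of_pos_left hf (mul_pos hxl (sub_pos.2 hF1))
      (mul_one_sub_FML_lt_mul_one_sub_FML s hxl hlh hxh hℓ1)⟩
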